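/- arXiv:2605.28985 — 2 statements merged into one kernel-verified Lean document; each statement's English description precedes it below -/
import Mathlib

section
/- Under the hypotheses of the envelope identity (q continuous positive increasing on [t₀,1], σ(t) = (1/p)(t - ∫_{t₀}^t q/q(t))), truth-telling is incentive compatible: for all t, t' ∈ [t₀,1], (t - p·σ(t))·q(t) ≥ (t - p·σ(t'))·q(t'). -/
open intervalIntegral

/-- Truth-telling is incentive compatible under the separating schedule
`σ(t) = (1/p)(t - (∫_{t₀}^t q)/q(t))`: no type gains by mimicking another. -/
theorem stmt_8 (p t₀ : ℝ) (hp : 0 < p) (ht₀ : t₀ ∈ Set.Icc (0:ℝ) 1)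
    (q : ℝ → ℝ) (hqc : ContinuousOn q (Set.Icc t₀ 1))
    (hqpos : ∀ t ∈ Set.Icc t₀ 1, 0 < q t)
    (hqmono : MonotoneOn q (Set.Icc t₀ 1))
    (σ : ℝ → ℝ)
    (hσ : ∀ t ∈ Set.Icc t₀ 1, σ t = (1/p) * (t - (∫ x in t₀..t, q x) / q t)) :
    ∀ t ∈ Set.Icc t₀ 1, ∀ t' ∈ Set.Icc t₀ 1,
      (t - p * σ t) * q t ≥ (t - p * σ t') * q t' := by
  intro t ht t' ht'
  have key : ∀ s ∈ Set.Icc t₀ 1, (t - p * σ s) * q s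
      = (t - s) * q s + ∫ x in t₀..s, q x := by
    intro s hs
    have hqs := (hqpos s hs).ne'
    rw [hσ s hs]
    field_simp
    ring
  rw [key t ht, key t' ht', sub_self, zero_mul, zero_add]
  have hint : ∀ a b : ℝ, a ∈ Set.Icc t₀ 1 → b ∈ Set.Icc t₀ 1 →
      IntervalIntegrable q MeasureTheory.volume a b := by
    intro a b ha hb
    apply ContinuousOn.intervalIntegrable
    apply hqc.mono
    exact Set.ordConnected_Icc.uIcc_subset ha hb
  -- reduce to ∫_{t'}^t q ≥ (t - t') q t'
  have hsplit : (∫ x in t₀..t, q x) = (∫ x in t₀..t', q x) + ∫ x in t'..t, q x :=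
    (intervalIntegral.integral_add_adjacent_intervals (hint t₀ t' ⟨le_rfl, ht'.1.trans ht'.2⟩ ht')
      (hint t' t ht' ht)).symm
  rw [hsplit]
  have hmain : (∫ x in t'..t, q x) ≥ (t - t') * q t' := by
    rcases le_total t' t with h | h
    · have : (∫ x in t'..t, (fun _ => q t') x) ≤ ∫ x in t'..t, q x := by
        apply intervalIntegral.integral_mono_on h intervalIntegrable_const
          (hint t' t ht' ht)
        intro x hx
        exact hqmono ht' ⟨le_trans ht'.1 hx.1, le_trans hx.2 ht.2⟩ hx.1
      simpa using this
    · have : (∫ x in t..t', q x) ≤ ∫ x in t..t', (fun _ => q t') x := by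
        apply intervalIntegral.integral_mono_on h (hint t t' ht ht')
          intervalIntegrable_const
        intro x hx
        exact hqmono ⟨le_trans ht.1 hx.1, le_trans hx.2 ht'.2⟩ ht' hx.2
      rw [intervalIntegral.integral_symm]
      simp only [intervalIntegral.integral_const, smul_eq_mul] at this ⊢
      nlinarith
  linarith
end

section
/- Let τ ∈ (0,1] and let K be a Binomial(n-1, 1-F(t₁)) random variable. Then q^pool(t₁) = E[(1 - (1-τ(t₁))^{K+1})/((K+1)·τ(t₁))], where τ(t₁) = E[t | t ≥ t₁], is strictly greater than q^sep(t₁) = (1 - ∫_{t₁}^1 x f(x)dx)^{n-1} whenever 1 - F(t₁) > 0 and n ≥ 2. -/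
lemma geom_avg_le (τ : ℝ) (hτ0 : 0 < τ) (hτ1 : τ ≤ 1) (k : ℕ) :
    (1 - τ) ^ k ≤ (1 - (1 - τ) ^ (k + 1)) / (((k : ℝ) + 1) * τ) := by
  set s : ℝ := 1 - τ with hs
  have hs0 : 0 ≤ s := by simp [hs]; linarith
  have hs1 : s < 1 := by simp [hs]; linarith
  have hpos : (0:ℝ) < ((k:ℝ) + 1) * τ := by positivity
  rw [le_div_iff₀ hpos]
  have hgeo : 1 - s ^ (k + 1) = (∑ j ∈ Finset.range (k + 1), s ^ j) * τ := by
    have h := geom_sum_mul s (k + 1)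
    linear_combination h - (∑ j ∈ Finset.range (k + 1), s ^ j) * hs
  rw [hgeo]
  have hsum : ((k:ℝ) + 1) * s ^ k ≤ ∑ j ∈ Finset.range (k + 1), s ^ j := by
    calc ((k:ℝ) + 1) * s ^ k = ∑ _j ∈ Finset.range (k + 1), s ^ k := by
          rw [Finset.sum_const, Finset.card_range]; push_cast; ring
      _ ≤ _ := Finset.sum_le_sum fun j hj =>
          pow_le_pow_of_le_one hs0 hs1.le (Finset.mem_range_succ_iff.mp hj)
  nlinarith [mul_le_mul_of_nonneg_right hsum hτ0.le]

lemma geom_avg_lt (τ : ℝ) (hτ0 : 0 < τ) (hτ1 : τ ≤ 1) (k : ℕ) (hk : 1 ≤ k) :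
    (1 - τ) ^ k < (1 - (1 - τ) ^ (k + 1)) / (((k : ℝ) + 1) * τ) := by
  set s : ℝ := 1 - τ with hs
  have hs0 : 0 ≤ s := by simp [hs]; linarith
  have hs1 : s < 1 := by simp [hs]; linarith
  have hpos : (0:ℝ) < ((k:ℝ) + 1) * τ := by positivity
  rw [lt_div_iff₀ hpos]
  have hgeo : 1 - s ^ (k + 1) = (∑ j ∈ Finset.range (k + 1), s ^ j) * τ := by
    have h := geom_sum_mul s (k + 1)
    linear_combination h - (∑ j ∈ Finset.range (k + 1), s ^ j) * hs
  rw [hgeo]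
  have hsum : ((k:ℝ) + 1) * s ^ k < ∑ j ∈ Finset.range (k + 1), s ^ j := by
    have : ∑ _j ∈ Finset.range (k + 1), s ^ k < ∑ j ∈ Finset.range (k + 1), s ^ j := by
      refine Finset.sum_lt_sum (fun j hj =>
        pow_le_pow_of_le_one hs0 hs1.le (Finset.mem_range_succ_iff.mp hj)) ?_
      exact ⟨0, Finset.mem_range.mpr (by omega), by
        simpa using pow_lt_one₀ hs0 hs1 (by omega)⟩
    calc ((k:ℝ) + 1) * s ^ k = ∑ _j ∈ Finset.range (k + 1), s ^ k := by
          rw [Finset.sum_const, Finset.card_range]; push_cast; ring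
      _ < _ := this
  nlinarith [mul_lt_mul_of_pos_right hsum hτ0]

/-- Pooling at the top strictly raises the attention of the marginal type:
`q^pool(t₁) = E[(1-(1-τ)^(K+1))/((K+1)τ)]` with `K ~ Bin(n-1, 1-F(t₁))`
strictly exceeds `q^sep(t₁) = (1 - ∫_{t₁}^1 x f(x) dx)^(n-1)` whenever
`F(t₁) < 1` and `n ≥ 2`. -/
theorem stmt_17 (F f : ℝ → ℝ) (n : ℕ) (hn : 2 ≤ n)
    (t₁ : ℝ) (ht₁ : t₁ ∈ Set.Icc (0:ℝ) 1)
    (hF0 : 0 ≤ F t₁) (hF1 : F t₁ < 1)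
    (τ : ℝ) (hτ0 : 0 < τ) (hτ1 : τ ≤ 1)
    (hτdef : (1 - F t₁) * τ = ∫ x in t₁..1, x * f x) :
    (1 - ∫ x in t₁..1, x * f x)^(n - 1)
      < ∑ k ∈ Finset.range n,
          ((n - 1).choose k : ℝ) * (1 - F t₁)^k * (F t₁)^(n - 1 - k) *
            ((1 - (1 - τ)^(k + 1)) / (((k:ℝ) + 1) * τ)) := by
  set p : ℝ := 1 - F t₁ with hp
  have hp0 : 0 < p := by simp [hp]; linarith
  set m : ℕ := n - 1 with hm
  have hmn : m + 1 = n := by omega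
  have hI : (1 - ∫ x in t₁..1, x * f x) = p * (1 - τ) + F t₁ := by
    rw [← hτdef]; simp [hp]; ring
  rw [hI, add_pow]
  rw [hmn]
  refine Finset.sum_lt_sum (fun k hk => ?_) ⟨m, Finset.mem_range.mpr (by omega), ?_⟩
  · have hcoef : 0 ≤ (m.choose k : ℝ) * p ^ k * (F t₁) ^ (m - k) := by positivity
    calc (p * (1 - τ)) ^ k * (F t₁) ^ (m - k) * (m.choose k : ℝ)
        = ((m.choose k : ℝ) * p ^ k * (F t₁) ^ (m - k)) * (1 - τ) ^ k := by
          rw [mul_pow]; ring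
      _ ≤ ((m.choose k : ℝ) * p ^ k * (F t₁) ^ (m - k)) *
            ((1 - (1 - τ) ^ (k + 1)) / (((k:ℝ) + 1) * τ)) :=
          mul_le_mul_of_nonneg_left (geom_avg_le τ hτ0 hτ1 k) hcoef
      _ = (m.choose k : ℝ) * p ^ k * (F t₁) ^ (m - k) *
            ((1 - (1 - τ) ^ (k + 1)) / (((k:ℝ) + 1) * τ)) := by ring
  · have hcoef : 0 < (m.choose m : ℝ) * p ^ m * (F t₁) ^ (m - m) := by
      simp [Nat.choose_self]; positivity
    calc (p * (1 - τ)) ^ m * (F t₁) ^ (m - m) * (m.choose m : ℝ)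
        = ((m.choose m : ℝ) * p ^ m * (F t₁) ^ (m - m)) * (1 - τ) ^ m := by
          rw [mul_pow]; ring
      _ < ((m.choose m : ℝ) * p ^ m * (F t₁) ^ (m - m)) *
            ((1 - (1 - τ) ^ (m + 1)) / (((m:ℝ) + 1) * τ)) :=
          mul_lt_mul_of_pos_left (geom_avg_lt τ hτ0 hτ1 m (by omega)) hcoef
      _ = (m.choose m : ℝ) * p ^ m * (F t₁) ^ (m - m) *
            ((1 - (1 - τ) ^ (m + 1)) / (((m:ℝ) + 1) * τ)) := by ring
end
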